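/- Consider the treated-neighbor-count estimand: exposure mapping T_i = (D_i, Σ_j A_{ij} D_j), subpopulation ℳ_n of units with exactly γ neighbors, and exposure values t = (d, τ), t' = (d, τ') with γ ≥ τ > τ' > 0. Suppose D_1,…,D_n are i.i.d. Bernoulli(p) conditional on 𝒞_i for every i, with p ∈ (0,1), and unconfoundedness holds (Y_i(·) ⊥ D | 𝒞_i). Then τ(t,t') satisfies ordered K-neighborhood sign preservation: if for every i ∈ ℳ_n every contrast Y_i(d̃) − Y_i(d̃') with d̃ ≥ d̃' componentwise, d̃ and d̃' agreeing outside N(i,1), d̃_i = d̃'_i = d, Σ_j A_{ij} d̃_j = τ, and Σ_j A_{ij} d̃'_j = τ' is nonnegative, then τ(t,t') ≥ 0 (and symmetrically for nonpositive). -/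

import Mathlib

/-!
Under conditionally i.i.d. Bernoulli(q) treatments and unconfoundedness, `E[Yᵢ | Tᵢ = (d, τ), 𝒞ᵢ]`
is the average of `E[Yᵢ(d̃); 𝒞ᵢ] / P(𝒞ᵢ)` over the assignments `d̃` with `d̃ᵢ = d` and `τ` treated
neighbours, weighted by their Bernoulli probabilities. Splitting `d̃` into its values off the
neighbourhood `N` and its set `S ⊆ N` of treated neighbours, the weight factors as
`q ^ τ (1 - q) ^ (γ - τ)` times a weight of the part off `N`. So the conditional mean is a mixture,
over the part off `N`, of uniform averages over the `τ`-subsets `S` of `N`, with mixing weights not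
depending on `τ`. Double counting the pairs `T ⊆ S` with `#T = τ'`, `#S = τ` shows that the average
over `τ'`-subsets of a function increasing along such inclusions is at most its average over
`τ`-subsets, and the ordered contrasts being of one sign is exactly this monotonicity.
-/

open Finset
open scoped Classical

noncomputable section

/-- Probability of event `A` under mass function `p` on a finite space. -/
def prb {Ω : Type*} [Fintype Ω] (p : Ω → ℝ) (A : Ω → Prop) : ℝ :=
  ∑ ω, if A ω then p ω else 0

/-- Unnormalized expectation of `f` on the event `A`. -/
def eiv {Ω : Type*} [Fintype Ω] (p : Ω → ℝ) (f : Ω → ℝ) (A : Ω → Prop) : ℝ :=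
  ∑ ω, if A ω then p ω * f ω else 0

/-- Expectation of `f`. -/
def expv {Ω : Type*} [Fintype Ω] (p : Ω → ℝ) (f : Ω → ℝ) : ℝ := ∑ ω, p ω * f ω

/-- Conditional expectation of `f` given the event `A`. -/
def cexp {Ω : Type*} [Fintype Ω] (p : Ω → ℝ) (f : Ω → ℝ) (A : Ω → Prop) : ℝ :=
  eiv p f A / prb p A

/-- Conditional probability of `A` given `B`. -/
def cpr {Ω : Type*} [Fintype Ω] (p : Ω → ℝ) (A B : Ω → Prop) : ℝ :=
  prb p (fun ω => A ω ∧ B ω) / prb p B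

/-- Real value of a boolean treatment. -/
def bR : Bool → ℝ := fun x => if x then 1 else 0

/-- Number of treated neighbors of `i` in the network `A` under assignment `d`. -/
def nbc {n : ℕ} (A : Fin n → Fin n → Bool) (i : Fin n) (d : Fin n → Bool) : ℕ :=
  (Finset.univ.filter (fun j => A i j = true ∧ d j = true)).card

/-- Degree of `i` in the network `A`. -/
def degA {n : ℕ} (A : Fin n → Fin n → Bool) (i : Fin n) : ℕ :=
  (Finset.univ.filter (fun j => A i j = true)).card

open scoped BigOperators

section FiniteExpectation

variable {Ω : Type*} [Fintype Ω] (p : Ω → ℝ)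

lemma prb_eq_eiv_one (A : Ω → Prop) : prb p A = eiv p (fun _ => 1) A := by
  simp only [prb, eiv, mul_one]

lemma eiv_congr {f g : Ω → ℝ} {A : Ω → Prop} (h : ∀ ω, A ω → f ω = g ω) :
    eiv p f A = eiv p g A :=
  sum_congr rfl fun ω _ => by
    split_ifs with hA
    · rw [h ω hA]
    · rfl

lemma eiv_mono (hp : ∀ ω, 0 ≤ p ω) {f g : Ω → ℝ} (hfg : ∀ ω, f ω ≤ g ω) (A : Ω → Prop) :
    eiv p f A ≤ eiv p g A :=
  sum_le_sum fun ω _ => by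
    split_ifs
    · exact mul_le_mul_of_nonneg_left (hfg ω) (hp ω)
    · rfl

lemma eiv_neg (f : Ω → ℝ) (A : Ω → Prop) : eiv p (fun ω => -f ω) A = -eiv p f A := by
  simp only [eiv, ← sum_neg_distrib]
  exact sum_congr rfl fun ω _ => by split_ifs <;> ring

lemma cexp_neg (f : Ω → ℝ) (A : Ω → Prop) : cexp p (fun ω => -f ω) A = -cexp p f A := by
  rw [cexp, cexp, eiv_neg, neg_div]

lemma eiv_eq_sum_eiv_fiber {β : Type*} [Fintype β] (g : Ω → β) (Q : β → Prop) [DecidablePred Q]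
    (B : Ω → Prop) (f : Ω → ℝ) :
    eiv p f (fun ω => Q (g ω) ∧ B ω) =
      ∑ b ∈ univ.filter Q, eiv p f (fun ω => g ω = b ∧ B ω) := by
  simp only [eiv]
  rw [sum_comm]
  refine sum_congr rfl fun ω _ => ?_
  by_cases hB : B ω <;> simp [hB, sum_ite_eq]

end FiniteExpectation

section Conditioning

variable {Ω β : Type*} [Fintype Ω] (p : Ω → ℝ) (D : Ω → β) (C : Ω → Prop)

lemma prb_and_eq_cpr_mul {B : Ω → Prop} (hB : prb p B ≠ 0) (A : Ω → Prop) :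
    prb p (fun ω => A ω ∧ B ω) = cpr p A B * prb p B :=
  (div_mul_cancel₀ _ hB).symm

lemma eiv_fiber_eq_mul {f : Ω → ℝ} {b : β} (hC : 0 < prb p C)
    (hunc : eiv p f (fun ω => D ω = b ∧ C ω) * prb p C =
      eiv p f C * prb p (fun ω => D ω = b ∧ C ω)) :
    eiv p f (fun ω => D ω = b ∧ C ω) = cpr p (fun ω => D ω = b) C * eiv p f C :=
  mul_right_cancel₀ hC.ne' (by rw [hunc, prb_and_eq_cpr_mul p hC.ne']; ring)

lemma cexp_eq_sum_mul_eiv_div [Fintype β] (Y : β → Ω → ℝ) (π : β → ℝ) (hC : 0 < prb p C)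
    (hD : ∀ b, cpr p (fun ω => D ω = b) C = π b)
    (hunc : ∀ b, eiv p (Y b) (fun ω => D ω = b ∧ C ω) * prb p C =
      eiv p (Y b) C * prb p (fun ω => D ω = b ∧ C ω))
    (Q : β → Prop) [DecidablePred Q] :
    cexp p (fun ω => Y (D ω) ω) (fun ω => Q (D ω) ∧ C ω) =
      (∑ b ∈ univ.filter Q, π b * eiv p (Y b) C) /
        ((∑ b ∈ univ.filter Q, π b) * prb p C) := by
  rw [cexp, eiv_eq_sum_eiv_fiber, prb_eq_eiv_one, eiv_eq_sum_eiv_fiber, sum_mul]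
  congr 1 <;> refine sum_congr rfl fun b _ => ?_
  · rw [← hD, ← eiv_fiber_eq_mul p D C hC (hunc b)]
    exact eiv_congr p fun ω hω => by rw [hω.1]
  · rw [← prb_eq_eiv_one, prb_and_eq_cpr_mul p hC.ne', hD]

end Conditioning

lemma Finset.bipartiteBelow_subset_powersetCard {α : Type*} [DecidableEq α] {N S : Finset α}
    (hS : S ⊆ N) (b : ℕ) : (N.powersetCard b).bipartiteBelow (· ⊆ ·) S = S.powersetCard b := by
  ext T
  simp only [mem_bipartiteBelow, mem_powersetCard]
  exact ⟨fun ⟨⟨_, hT⟩, hTS⟩ => ⟨hTS, hT⟩, fun ⟨hTS, hT⟩ => ⟨⟨hTS.trans hS, hT⟩, hTS⟩⟩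

lemma Finset.expect_powersetCard_le_expect_powersetCard {α : Type*} [DecidableEq α]
    (N : Finset α) {a b : ℕ} (hba : b ≤ a) (haN : a ≤ #N) (f : Finset α → ℝ)
    (hf : ∀ S ∈ N.powersetCard a, ∀ T ∈ N.powersetCard b, T ⊆ S → f T ≤ f S) :
    𝔼 T ∈ N.powersetCard b, f T ≤ 𝔼 S ∈ N.powersetCard a, f S := by
  have hcount : (∑ T ∈ N.powersetCard b, f T) * (#N - b).choose (a - b) ≤
      (∑ S ∈ N.powersetCard a, f S) * a.choose b :=
    calc (∑ T ∈ N.powersetCard b, f T) * (#N - b).choose (a - b)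
        = ∑ T ∈ N.powersetCard b, ∑ _S ∈ (N.powersetCard a).bipartiteAbove (· ⊆ ·) T, f T := by
          rw [sum_mul]
          refine sum_congr rfl fun T hT => ?_
          obtain ⟨hTN, hTb⟩ := mem_powersetCard.mp hT
          rw [sum_const, bipartiteAbove, card_filter_powersetCard_subset T N a hTN (hTb ▸ hba),
            hTb, nsmul_eq_mul, mul_comm]
      _ ≤ ∑ T ∈ N.powersetCard b, ∑ S ∈ (N.powersetCard a).bipartiteAbove (· ⊆ ·) T, f S :=
          sum_le_sum fun T hT => sum_le_sum fun S hS =>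
            hf S ((mem_bipartiteAbove _).mp hS).1 T hT ((mem_bipartiteAbove _).mp hS).2
      _ = ∑ S ∈ N.powersetCard a, ∑ _T ∈ (N.powersetCard b).bipartiteBelow (· ⊆ ·) S, f S :=
          sum_sum_bipartiteAbove_eq_sum_sum_bipartiteBelow _ _
      _ = (∑ S ∈ N.powersetCard a, f S) * a.choose b := by
          rw [sum_mul]
          refine sum_congr rfl fun S hS => ?_
          obtain ⟨hSN, hSa⟩ := mem_powersetCard.mp hS
          rw [sum_const, bipartiteBelow_subset_powersetCard hSN, card_powersetCard, hSa,
            nsmul_eq_mul, mul_comm]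
  have hchoose : ((#N).choose a * a.choose b : ℝ) = (#N).choose b * (#N - b).choose (a - b) := by
    exact_mod_cast Nat.choose_mul hba
  have hpos : ∀ k ≤ #N, (0 : ℝ) < (#N).choose k := fun k hk => by
    exact_mod_cast Nat.choose_pos hk
  have hab : (0 : ℝ) < a.choose b := by exact_mod_cast Nat.choose_pos hba
  rw [expect_eq_sum_div_card, expect_eq_sum_div_card, card_powersetCard, card_powersetCard,
    div_le_div_iff₀ (hpos b (hba.trans haN)) (hpos a haN)]
  refine le_of_mul_le_mul_right ?_ hab
  calc (∑ T ∈ N.powersetCard b, f T) * (#N).choose a * a.choose b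
      = (∑ T ∈ N.powersetCard b, f T) * (#N - b).choose (a - b) * (#N).choose b := by
        rw [mul_assoc, hchoose]; ring
    _ ≤ (∑ S ∈ N.powersetCard a, f S) * a.choose b * (#N).choose b := by gcongr
    _ = (∑ S ∈ N.powersetCard a, f S) * (#N).choose b * a.choose b := by ring

def bernoulliWeight {ι : Type*} (q : ℝ) (s : Finset ι) (d : ι → Bool) : ℝ :=
  ∏ j ∈ s, if d j then q else 1 - q

lemma bernoulliWeight_nonneg {ι : Type*} {q : ℝ} (hq0 : 0 ≤ q) (hq1 : q ≤ 1) (s : Finset ι)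
    (d : ι → Bool) : 0 ≤ bernoulliWeight q s d :=
  prod_nonneg fun j _ => by split_ifs <;> linarith

section Overwrite

variable {ι : Type*} [DecidableEq ι]

def overwriteOn (N S : Finset ι) (r : ι → Bool) : ι → Bool :=
  N.piecewise (fun j => decide (j ∈ S)) r

def baseAssignments [Fintype ι] (N : Finset ι) (i : ι) (b : Bool) : Finset (ι → Bool) :=
  univ.filter (fun r => r i = b ∧ ∀ j ∈ N, r j = false)

variable {N S : Finset ι} {r : ι → Bool} {j : ι}

lemma mem_baseAssignments [Fintype ι] {i : ι} {b : Bool} :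
    r ∈ baseAssignments N i b ↔ r i = b ∧ ∀ j ∈ N, r j = false := by
  simp [baseAssignments]

@[simp]
lemma overwriteOn_of_mem (hj : j ∈ N) : overwriteOn N S r j = decide (j ∈ S) :=
  piecewise_eq_of_mem _ _ _ hj

@[simp]
lemma overwriteOn_of_notMem (hj : j ∉ N) : overwriteOn N S r j = r j :=
  piecewise_eq_of_notMem _ _ _ hj

lemma filter_overwriteOn (hS : S ⊆ N) (r : ι → Bool) :
    N.filter (fun j => overwriteOn N S r j = true) = S := by
  ext j
  by_cases hj : j ∈ N
  · simp [hj]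
  · simpa [hj] using fun h => hj (hS h)

lemma overwriteOn_mono {T : Finset ι} (hTS : T ⊆ S) (h : overwriteOn N T r j = true) :
    overwriteOn N S r j = true := by
  by_cases hj : j ∈ N
  · simp only [overwriteOn_of_mem hj, decide_eq_true_eq] at h ⊢
    exact hTS h
  · rwa [overwriteOn_of_notMem hj] at h ⊢

lemma bernoulliWeight_overwriteOn [Fintype ι] (hS : S ⊆ N) (q : ℝ) (r : ι → Bool) :
    bernoulliWeight q univ (overwriteOn N S r) =
      q ^ #S * (1 - q) ^ (#N - #S) * bernoulliWeight q Nᶜ r := by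
  rw [bernoulliWeight, ← prod_mul_prod_compl N, bernoulliWeight, prod_ite]
  congr 1
  · rw [filter_not, filter_overwriteOn hS, prod_const, prod_const, card_sdiff_of_subset hS]
  · exact prod_congr rfl fun j hj => by rw [overwriteOn_of_notMem (mem_compl.mp hj)]

lemma sum_filter_card_eq_sum_sum_overwriteOn [Fintype ι] {M : Type*} [AddCommMonoid M]
    {i : ι} (hi : i ∉ N) (b : Bool) (τ : ℕ) (F : (ι → Bool) → M) :
    ∑ d ∈ univ.filter (fun d => d i = b ∧ #(N.filter (fun j => d j = true)) = τ), F d =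
      ∑ r ∈ baseAssignments N i b, ∑ S ∈ N.powersetCard τ, F (overwriteOn N S r) := by
  have hsplit : ∀ d : ι → Bool, overwriteOn N (N.filter (fun j => d j = true))
      (overwriteOn N ∅ d) = d := fun d => funext fun j => by
    by_cases hj : j ∈ N <;> simp [hj]
  rw [← sum_product']
  refine sum_nbij' (fun d => (overwriteOn N ∅ d, N.filter (fun j => d j = true)))
    (fun x => overwriteOn N x.2 x.1) ?_ ?_ ?_ ?_ ?_
  · intro d hd
    simp only [mem_filter, mem_univ, true_and] at hd
    simp only [mem_baseAssignments, mem_product, mem_powersetCard]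
    exact ⟨⟨by simp [hi, hd.1], fun j hj => by simp [hj]⟩, filter_subset _ _, hd.2⟩
  · rintro ⟨r, S⟩ hx
    simp only [mem_baseAssignments, mem_product, mem_powersetCard] at hx
    simp [hi, hx.1.1, filter_overwriteOn hx.2.1, hx.2.2]
  · intro d _
    exact hsplit d
  · rintro ⟨r, S⟩ hx
    simp only [mem_baseAssignments, mem_product, mem_powersetCard] at hx
    refine Prod.ext (funext fun j => ?_) (filter_overwriteOn hx.2.1 r)
    by_cases hj : j ∈ N
    · simp [hj, hx.1.2 j hj]
    · simp [hj]
  · intro d _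
    rw [hsplit d]

end Overwrite

section Network

variable {n : ℕ} (A : Fin n → Fin n → Bool) (i : Fin n)

def nbhd : Finset (Fin n) := univ.filter (fun j => A i j = true)

lemma degA_eq_card_nbhd : degA A i = #(nbhd A i) := rfl

lemma nbc_eq_card_filter_nbhd (d : Fin n → Bool) :
    nbc A i d = #((nbhd A i).filter (fun j => d j = true)) := by
  rw [nbc, nbhd, filter_filter]

lemma notMem_nbhd {A : Fin n → Fin n → Bool} {i : Fin n} (hAi : A i i = false) :
    i ∉ nbhd A i := by
  simp [nbhd, hAi]

lemma nbc_overwriteOn {S : Finset (Fin n)} (hS : S ⊆ nbhd A i) (r : Fin n → Bool) :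
    nbc A i (overwriteOn (nbhd A i) S r) = #S := by
  rw [nbc_eq_card_filter_nbhd, filter_overwriteOn hS]

lemma sum_exposure_bernoulliWeight_mul {A : Fin n → Fin n → Bool} {i : Fin n}
    (hAi : A i i = false) (db : Bool) (q : ℝ) (τ : ℕ) (F : (Fin n → Bool) → ℝ) :
    ∑ d ∈ univ.filter (fun d => d i = db ∧ nbc A i d = τ), bernoulliWeight q univ d * F d =
      q ^ τ * (1 - q) ^ (degA A i - τ) * (degA A i).choose τ *
        ∑ r ∈ baseAssignments (nbhd A i) i db, bernoulliWeight q (nbhd A i)ᶜ r *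
          𝔼 S ∈ (nbhd A i).powersetCard τ, F (overwriteOn (nbhd A i) S r) := by
  simp_rw [nbc_eq_card_filter_nbhd]
  rw [sum_filter_card_eq_sum_sum_overwriteOn (notMem_nbhd hAi), mul_sum]
  refine sum_congr rfl fun r _ => ?_
  calc ∑ S ∈ (nbhd A i).powersetCard τ,
        bernoulliWeight q univ (overwriteOn (nbhd A i) S r) * F (overwriteOn (nbhd A i) S r)
      = ∑ S ∈ (nbhd A i).powersetCard τ, q ^ τ * (1 - q) ^ (degA A i - τ) *
          bernoulliWeight q (nbhd A i)ᶜ r * F (overwriteOn (nbhd A i) S r) := by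
        refine sum_congr rfl fun S hS => ?_
        obtain ⟨hSN, hSτ⟩ := mem_powersetCard.mp hS
        rw [bernoulliWeight_overwriteOn hSN, hSτ, degA_eq_card_nbhd]
    _ = _ := by
        rw [← mul_sum, ← card_mul_expect, card_powersetCard, degA_eq_card_nbhd]
        ring

end Network

section Exposure

variable {Ω : Type*} [Fintype Ω] {n : ℕ} (p : Ω → ℝ) {A : Fin n → Fin n → Bool} {i : Fin n}
  (D : Ω → Fin n → Bool) (C : Ω → Prop) (db : Bool) {q : ℝ}

lemma cexp_exposure_eq (hAi : A i i = false) (hq0 : 0 < q) (hq1 : q < 1)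
    (hC : 0 < prb p C) (Y : (Fin n → Bool) → Ω → ℝ)
    (hiid : ∀ d, cpr p (fun ω => D ω = d) C = bernoulliWeight q univ d)
    (hunc : ∀ d, eiv p (Y d) (fun ω => D ω = d ∧ C ω) * prb p C =
      eiv p (Y d) C * prb p (fun ω => D ω = d ∧ C ω))
    {τ : ℕ} (hτ : τ ≤ degA A i) :
    cexp p (fun ω => Y (D ω) ω) (fun ω => (D ω i = db ∧ nbc A i (D ω) = τ) ∧ C ω) =
      (∑ r ∈ baseAssignments (nbhd A i) i db, bernoulliWeight q (nbhd A i)ᶜ r *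
          𝔼 S ∈ (nbhd A i).powersetCard τ, eiv p (Y (overwriteOn (nbhd A i) S r)) C) /
        ((∑ r ∈ baseAssignments (nbhd A i) i db, bernoulliWeight q (nbhd A i)ᶜ r) * prb p C) := by
  have hnum := sum_exposure_bernoulliWeight_mul hAi db q τ (fun d => eiv p (Y d) C)
  have hden := sum_exposure_bernoulliWeight_mul hAi db q τ (fun _ => 1)
  have hne : ((nbhd A i).powersetCard τ).Nonempty := powersetCard_nonempty.2 hτ
  simp only [mul_one, expect_const hne] at hden
  have hc : q ^ τ * (1 - q) ^ (degA A i - τ) * (degA A i).choose τ ≠ 0 := by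
    have : (0 : ℝ) < (degA A i).choose τ := by exact_mod_cast Nat.choose_pos hτ
    have : 0 < 1 - q := by linarith
    positivity
  rw [cexp_eq_sum_mul_eiv_div p D C Y _ hC hiid hunc (fun d => d i = db ∧ nbc A i d = τ), hnum, hden,
    mul_assoc _ (∑ r ∈ _, _) (prb p C), mul_div_mul_left _ _ hc]

lemma cexp_exposure_le_of_monotone (hp : ∀ ω, 0 ≤ p ω) (hAi : A i i = false)
    (hq0 : 0 < q) (hq1 : q < 1) (hC : 0 < prb p C) (Y : (Fin n → Bool) → Ω → ℝ)
    (hiid : ∀ d, cpr p (fun ω => D ω = d) C = bernoulliWeight q univ d)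
    (hunc : ∀ d, eiv p (Y d) (fun ω => D ω = d ∧ C ω) * prb p C =
      eiv p (Y d) C * prb p (fun ω => D ω = d ∧ C ω))
    {τa τb : ℕ} (h1 : τa ≤ degA A i) (hba : τb ≤ τa)
    (hmono : ∀ d d' : Fin n → Bool,
      (∀ j, j ≠ i ∧ A i j = false → d j = d' j) →
      (∀ j, d' j = true → d j = true) →
      d i = db → d' i = db → nbc A i d = τa → nbc A i d' = τb →
      ∀ ω, Y d' ω ≤ Y d ω) :
    cexp p (fun ω => Y (D ω) ω) (fun ω => (D ω i = db ∧ nbc A i (D ω) = τb) ∧ C ω) ≤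
      cexp p (fun ω => Y (D ω) ω) (fun ω => (D ω i = db ∧ nbc A i (D ω) = τa) ∧ C ω) := by
  rw [cexp_exposure_eq p D C db hAi hq0 hq1 hC Y hiid hunc h1,
    cexp_exposure_eq p D C db hAi hq0 hq1 hC Y hiid hunc (hba.trans h1)]
  have hρ := bernoulliWeight_nonneg hq0.le hq1.le (nbhd A i)ᶜ
  gcongr with r hr
  · exact mul_nonneg (sum_nonneg fun r _ => hρ r) hC.le
  · exact hρ r
  · refine expect_powersetCard_le_expect_powersetCard (nbhd A i) hba h1 _ fun S hS T hT hTS => ?_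
    obtain ⟨hSN, hSa⟩ := mem_powersetCard.mp hS
    obtain ⟨hTN, hTb⟩ := mem_powersetCard.mp hT
    have hri : ∀ S, overwriteOn (nbhd A i) S r i = db := fun S => by
      rw [overwriteOn_of_notMem (notMem_nbhd hAi), (mem_baseAssignments.mp hr).1]
    refine eiv_mono p hp (hmono (overwriteOn (nbhd A i) S r) (overwriteOn (nbhd A i) T r)
      (fun j hj => ?_) (fun j => overwriteOn_mono hTS) (hri S) (hri T)
      ((nbc_overwriteOn A i hSN r).trans hSa) ((nbc_overwriteOn A i hTN r).trans hTb)) C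
    have hjN : j ∉ nbhd A i := by simp [nbhd, hj.2]
    simp [hjN]

lemma cexp_exposure_le_of_antitone (hp : ∀ ω, 0 ≤ p ω) (hAi : A i i = false)
    (hq0 : 0 < q) (hq1 : q < 1) (hC : 0 < prb p C) (Y : (Fin n → Bool) → Ω → ℝ)
    (hiid : ∀ d, cpr p (fun ω => D ω = d) C = bernoulliWeight q univ d)
    (hunc : ∀ d, eiv p (Y d) (fun ω => D ω = d ∧ C ω) * prb p C =
      eiv p (Y d) C * prb p (fun ω => D ω = d ∧ C ω))
    {τa τb : ℕ} (h1 : τa ≤ degA A i) (hba : τb ≤ τa)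
    (hanti : ∀ d d' : Fin n → Bool,
      (∀ j, j ≠ i ∧ A i j = false → d j = d' j) →
      (∀ j, d' j = true → d j = true) →
      d i = db → d' i = db → nbc A i d = τa → nbc A i d' = τb →
      ∀ ω, Y d ω ≤ Y d' ω) :
    cexp p (fun ω => Y (D ω) ω) (fun ω => (D ω i = db ∧ nbc A i (D ω) = τa) ∧ C ω) ≤
      cexp p (fun ω => Y (D ω) ω) (fun ω => (D ω i = db ∧ nbc A i (D ω) = τb) ∧ C ω) := by
  have h := cexp_exposure_le_of_monotone p D C db hp hAi hq0 hq1 hC (fun d ω => -Y d ω) hiid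
    (fun d => by simp only [eiv_neg, neg_mul, hunc d]) h1 hba
    (fun d d' h₁ h₂ h₃ h₄ h₅ h₆ ω => neg_le_neg (hanti d d' h₁ h₂ h₃ h₄ h₅ h₆ ω))
  simpa only [cexp_neg, neg_le_neg_iff] using h

end Exposure

theorem stmt14_general {Ω : Type*} [Fintype Ω] {n : ℕ}
    (p : Ω → ℝ) (hp : ∀ ω, 0 ≤ p ω)
    (A : Fin n → Fin n → Bool) (hA : ∀ i, A i i = false)
    (Y : Fin n → (Fin n → Bool) → Ω → ℝ) (D : Ω → Fin n → Bool)
    (C : Fin n → Ω → Prop)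
    (γdeg τa τb : ℕ) (h1 : τa ≤ γdeg) (h2 : τb < τa) (db : Bool)
    (q : ℝ) (hq0 : 0 < q) (hq1 : q < 1)
    -- treatments are i.i.d. Bernoulli(q) conditional on 𝒞ᵢ, for every i
    (hC : ∀ i, 0 < prb p (C i))
    (hiid : ∀ (i : Fin n) (d : Fin n → Bool),
      cpr p (fun ω => D ω = d) (C i) = ∏ j, (if d j then q else 1 - q))
    -- unconfoundedness: Yᵢ(·) ⊥ D | 𝒞ᵢ
    (hunc : ∀ (i : Fin n) (d dvec : Fin n → Bool),
      eiv p (fun ω => Y i d ω) (fun ω => D ω = dvec ∧ C i ω) * prb p (C i) =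
        eiv p (fun ω => Y i d ω) (C i) * prb p (fun ω => D ω = dvec ∧ C i ω)) :
    -- ordered K-neighborhood sign preservation for
    -- τ(t,t') = (1/mₙ) Σ_{i : deg i = γdeg} (E[Yᵢ | Tᵢ=(db,τa), 𝒞ᵢ] − E[Yᵢ | Tᵢ=(db,τb), 𝒞ᵢ])
    ((∀ i ∈ Finset.univ.filter (fun i : Fin n => degA A i = γdeg),
        ∀ d d' : Fin n → Bool,
        (∀ j, j ≠ i ∧ A i j = false → d j = d' j) →   -- agree outside N(i,1)
        (∀ j, d' j = true → d j = true) →              -- d ≥ d' componentwise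
        d i = db → d' i = db → nbc A i d = τa → nbc A i d' = τb →
        ∀ ω, Y i d' ω ≤ Y i d ω) →
      0 ≤ ((Finset.univ.filter (fun i : Fin n => degA A i = γdeg)).card : ℝ)⁻¹ *
        ∑ i ∈ Finset.univ.filter (fun i : Fin n => degA A i = γdeg),
          (cexp p (fun ω => Y i (D ω) ω)
              (fun ω => (D ω i = db ∧ nbc A i (D ω) = τa) ∧ C i ω) -
           cexp p (fun ω => Y i (D ω) ω)
              (fun ω => (D ω i = db ∧ nbc A i (D ω) = τb) ∧ C i ω))) ∧
    ((∀ i ∈ Finset.univ.filter (fun i : Fin n => degA A i = γdeg),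
        ∀ d d' : Fin n → Bool,
        (∀ j, j ≠ i ∧ A i j = false → d j = d' j) →
        (∀ j, d' j = true → d j = true) →
        d i = db → d' i = db → nbc A i d = τa → nbc A i d' = τb →
        ∀ ω, Y i d ω ≤ Y i d' ω) →
      ((Finset.univ.filter (fun i : Fin n => degA A i = γdeg)).card : ℝ)⁻¹ *
        ∑ i ∈ Finset.univ.filter (fun i : Fin n => degA A i = γdeg),
          (cexp p (fun ω => Y i (D ω) ω)
              (fun ω => (D ω i = db ∧ nbc A i (D ω) = τa) ∧ C i ω) -
           cexp p (fun ω => Y i (D ω) ω)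
              (fun ω => (D ω i = db ∧ nbc A i (D ω) = τb) ∧ C i ω)) ≤ 0) := by
  refine ⟨fun hmono => ?_, fun hanti => ?_⟩
  · refine mul_nonneg (by positivity) (sum_nonneg fun i hi => sub_nonneg.mpr ?_)
    exact cexp_exposure_le_of_monotone p D (C i) db hp (hA i) hq0 hq1 (hC i) (Y i) (hiid i)
      (fun d => hunc i d d) (h1.trans_eq (mem_filter.mp hi).2.symm) h2.le (hmono i hi)
  · refine mul_nonpos_of_nonneg_of_nonpos (by positivity)
      (sum_nonpos fun i hi => sub_nonpos.mpr ?_)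
    exact cexp_exposure_le_of_antitone p D (C i) db hp (hA i) hq0 hq1 (hC i) (Y i) (hiid i)
      (fun d => hunc i d d) (h1.trans_eq (mem_filter.mp hi).2.symm) h2.le (hanti i hi)

/-- Theorem 3: for the treated-neighbor-count estimand with exposure
`Tᵢ = (Dᵢ, Σⱼ Aᵢⱼ Dⱼ)`, subpopulation of units with degree `γdeg`, exposure values
`t = (db, τa)` and `t' = (db, τb)` with `γdeg ≥ τa > τb > 0`, if the treatments are i.i.d.
Bernoulli(q) conditional on `𝒞ᵢ` for every `i`, `q ∈ (0,1)`, and unconfoundedness holds,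
then `τ(t,t')` satisfies ordered K-neighborhood sign preservation. -/
theorem stmt14 {Ω : Type*} [Fintype Ω] {n : ℕ}
    (p : Ω → ℝ) (hp : ∀ ω, 0 ≤ p ω) (hp1 : ∑ ω, p ω = 1)
    (A : Fin n → Fin n → Bool) (hA : ∀ i, A i i = false)
    (Y : Fin n → (Fin n → Bool) → Ω → ℝ) (D : Ω → Fin n → Bool)
    (C : Fin n → Ω → Prop)
    (γdeg τa τb : ℕ) (h1 : τa ≤ γdeg) (h2 : τb < τa) (h3 : 0 < τb) (db : Bool)
    (q : ℝ) (hq0 : 0 < q) (hq1 : q < 1)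
    -- treatments are i.i.d. Bernoulli(q) conditional on 𝒞ᵢ, for every i
    (hC : ∀ i, 0 < prb p (C i))
    (hiid : ∀ (i : Fin n) (d : Fin n → Bool),
      cpr p (fun ω => D ω = d) (C i) = ∏ j, (if d j then q else 1 - q))
    -- unconfoundedness: Yᵢ(·) ⊥ D | 𝒞ᵢ
    (hunc : ∀ (i : Fin n) (d dvec : Fin n → Bool),
      eiv p (fun ω => Y i d ω) (fun ω => D ω = dvec ∧ C i ω) * prb p (C i) =
        eiv p (fun ω => Y i d ω) (C i) * prb p (fun ω => D ω = dvec ∧ C i ω)) :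
    -- ordered K-neighborhood sign preservation for
    -- τ(t,t') = (1/mₙ) Σ_{i : deg i = γdeg} (E[Yᵢ | Tᵢ=(db,τa), 𝒞ᵢ] − E[Yᵢ | Tᵢ=(db,τb), 𝒞ᵢ])
    ((∀ i ∈ Finset.univ.filter (fun i : Fin n => degA A i = γdeg),
        ∀ d d' : Fin n → Bool,
        (∀ j, j ≠ i ∧ A i j = false → d j = d' j) →   -- agree outside N(i,1)
        (∀ j, d' j = true → d j = true) →              -- d ≥ d' componentwise
        d i = db → d' i = db → nbc A i d = τa → nbc A i d' = τb →
        ∀ ω, Y i d' ω ≤ Y i d ω) →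
      0 ≤ ((Finset.univ.filter (fun i : Fin n => degA A i = γdeg)).card : ℝ)⁻¹ *
        ∑ i ∈ Finset.univ.filter (fun i : Fin n => degA A i = γdeg),
          (cexp p (fun ω => Y i (D ω) ω)
              (fun ω => (D ω i = db ∧ nbc A i (D ω) = τa) ∧ C i ω) -
           cexp p (fun ω => Y i (D ω) ω)
              (fun ω => (D ω i = db ∧ nbc A i (D ω) = τb) ∧ C i ω))) ∧
    ((∀ i ∈ Finset.univ.filter (fun i : Fin n => degA A i = γdeg),
        ∀ d d' : Fin n → Bool,
        (∀ j, j ≠ i ∧ A i j = false → d j = d' j) →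
        (∀ j, d' j = true → d j = true) →
        d i = db → d' i = db → nbc A i d = τa → nbc A i d' = τb →
        ∀ ω, Y i d ω ≤ Y i d' ω) →
      ((Finset.univ.filter (fun i : Fin n => degA A i = γdeg)).card : ℝ)⁻¹ *
        ∑ i ∈ Finset.univ.filter (fun i : Fin n => degA A i = γdeg),
          (cexp p (fun ω => Y i (D ω) ω)
              (fun ω => (D ω i = db ∧ nbc A i (D ω) = τa) ∧ C i ω) -
           cexp p (fun ω => Y i (D ω) ω)
              (fun ω => (D ω i = db ∧ nbc A i (D ω) = τb) ∧ C i ω)) ≤ 0) :=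
  stmt14_general p hp A hA Y D C γdeg τa τb h1 h2 db q hq0 hq1 hC hiid hunc
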